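/- If F^σ T admits a degree-inverting involution, then the number of equivalence classes of degree-inverting involutions on F^σ T equals the index |Ĥ / S(Ĥ)| where Ĥ = Hom(T, F^×) and S(Ĥ) is the subgroup of squares of Ĥ. -/

import Mathlib

/-!
Fix a degree-inverting involution `ρ₀`. For any other one `ρ`, the product `ρ₀ * ρ` is a graded
automorphism, and the graded automorphisms are exactly the diagonal scalings `X_u ↦ η(u) X_u` by
characters `η ∈ Ĥ`; hence `χ ↦ ρ₀ * diag χ` identifies `Ĥ` with the set of involutions. Since `ρ₀`
conjugates `diag η` to `diag η⁻¹`, conjugating `ρ₀ * diag χ` by `diag η` gives `ρ₀ * diag (χ η²)`,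
so the equivalence classes are the cosets of the squares `S(Ĥ)`.
-/

/-- A 2-cocycle on `T` with values in `Fˣ` (trivial action). -/
def IsCocycle {T : Type*} [Group T] {F : Type*} [Field F] (σ : T → T → Fˣ) : Prop :=
  ∀ u v w : T, σ u v * σ (u * v) w = σ u (v * w) * σ v w

/-- The twisted product on `F^σ T = T →₀ F`, determined on the basis by
`X_u * X_v = σ(u,v) X_{uv}`. -/
noncomputable def twistedMul {T : Type*} [Group T] {F : Type*} [Field F]
    (σ : T → T → Fˣ) (f g : T →₀ F) : T →₀ F :=
  f.sum fun u a => g.sum fun v b => Finsupp.single (u * v) (a * b * (σ u v : F))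

/-- A degree-inverting involution of `F^σ T`: an `F`-linear bijection which is an
anti-automorphism, squares to the identity, and maps the homogeneous component of
degree `u` (the span of `X_u`) into the component of degree `u⁻¹`. -/
def IsDegInvInvolution {T : Type*} [Group T] {F : Type*} [Field F]
    (σ : T → T → Fˣ) (ρ : (T →₀ F) ≃ₗ[F] (T →₀ F)) : Prop :=
  (∀ f g : T →₀ F, ρ (twistedMul σ f g) = twistedMul σ (ρ g) (ρ f)) ∧
  (∀ f : T →₀ F, ρ (ρ f) = f) ∧
  (∀ (u : T) (a : F), ∃ c : F, ρ (Finsupp.single u a) = Finsupp.single u⁻¹ c)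


/-- A `T`-graded (degree-preserving) automorphism of `F^σ T`: an `F`-linear bijection
which is multiplicative and preserves each homogeneous component `span{X_u}`. -/
def IsGradedAut {T : Type*} [Group T] {F : Type*} [Field F]
    (σ : T → T → Fˣ) (ψ : (T →₀ F) ≃ₗ[F] (T →₀ F)) : Prop :=
  (∀ f g : T →₀ F, ψ (twistedMul σ f g) = twistedMul σ (ψ f) (ψ g)) ∧
  (∀ (u : T) (a : F), ∃ c : F, ψ (Finsupp.single u a) = Finsupp.single u c)

open Finsupp

lemma Finsupp.linearEquiv_ext {α R M N : Type*} [Semiring R] [AddCommMonoid M] [Module R M]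
    [AddCommMonoid N] [Module R N] {φ ψ : (α →₀ M) ≃ₗ[R] N}
    (h : ∀ a m, φ (single a m) = ψ (single a m)) : φ = ψ :=
  LinearEquiv.toLinearMap_injective (lhom_ext h)

section TwistedMul

variable {T : Type*} [Group T] {F : Type*} [Field F] (σ : T → T → Fˣ)

@[simp]
lemma twistedMul_single (u v : T) (a b : F) :
    twistedMul σ (single u a) (single v b) = single (u * v) (a * b * σ u v) := by
  simp [twistedMul]

@[simp]
lemma twistedMul_zero_left (g : T →₀ F) : twistedMul σ 0 g = 0 := by
  simp [twistedMul]

@[simp]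
lemma twistedMul_zero_right (f : T →₀ F) : twistedMul σ f 0 = 0 := by
  simp [twistedMul]

lemma twistedMul_add_left (f₁ f₂ g : T →₀ F) :
    twistedMul σ (f₁ + f₂) g = twistedMul σ f₁ g + twistedMul σ f₂ g := by
  unfold twistedMul
  refine sum_add_index' (by simp) fun u a₁ a₂ => ?_
  rw [← sum_add]
  simp only [add_mul, single_add]

lemma twistedMul_add_right (f g₁ g₂ : T →₀ F) :
    twistedMul σ f (g₁ + g₂) = twistedMul σ f g₁ + twistedMul σ f g₂ := by
  unfold twistedMul
  rw [← sum_add]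
  refine sum_congr fun u _ => sum_add_index' (by simp) fun v b₁ b₂ => ?_
  simp only [mul_add, add_mul, single_add]

end TwistedMul

section DiagScale

variable {T : Type*} {R : Type*} [CommSemiring R]

noncomputable def diagScale : (T → Rˣ) →* (T →₀ R) ≃ₗ[R] (T →₀ R) :=
  (DistribMulAction.toModuleAut R (T →₀ R)).comp MulEquiv.piUnits.symm.toMonoidHom

@[simp]
lemma diagScale_single (ν : T → Rˣ) (u : T) (a : R) :
    diagScale ν (single u a) = single u (ν u * a) := by
  ext v
  obtain rfl | huv := eq_or_ne u v <;> simp [diagScale, Units.smul_def, coe_pointwise_smul, *]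

lemma diagScale_injective :
    Function.Injective (diagScale : (T → Rˣ) →* (T →₀ R) ≃ₗ[R] (T →₀ R)) := by
  intro ν ν' h
  funext u
  exact Units.ext (by simpa using congr($h (single u 1) u))

end DiagScale

section Graded

variable {T : Type*} [Group T] {F : Type*} [Field F] {σ : T → T → Fˣ}

variable (σ) in
lemma isGradedAut_diagScale (η : T →* Fˣ) : IsGradedAut σ (diagScale ⇑η) := by
  refine ⟨fun f g => ?_, fun u a => ⟨_, diagScale_single _ u a⟩⟩
  induction f using Finsupp.induction_linear with
  | zero => simp
  | add f₁ f₂ h₁ h₂ => simp only [twistedMul_add_left, map_add, h₁, h₂]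
  | single u a =>
    induction g using Finsupp.induction_linear with
    | zero => simp
    | add g₁ g₂ h₁ h₂ => simp only [twistedMul_add_right, map_add, h₁, h₂]
    | single v b =>
      simp only [twistedMul_single, diagScale_single, map_mul, Units.val_mul]
      congr 1
      ring

lemma IsGradedAut.exists_eq_diagScale {φ : (T →₀ F) ≃ₗ[F] (T →₀ F)} (hφ : IsGradedAut σ φ) :
    ∃ η : T →* Fˣ, φ = diagScale ⇑η := by
  choose d hd using fun u => hφ.2 u 1
  have hφ_single : ∀ u a, φ (single u a) = single u (d u * a) := by
    intro u a
    rw [← smul_single_one, map_smul, hd, smul_single, smul_eq_mul, mul_comm]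
  have hd_ne_zero : ∀ u, d u ≠ 0 := by
    intro u h
    have : φ (single u 1) = φ 0 := by rw [hd, h, single_zero, map_zero]
    exact one_ne_zero (single_eq_zero.mp (φ.injective this))
  have hd_mul : ∀ u v, d (u * v) = d u * d v := by
    intro u v
    simpa [hφ_single] using congr($(hφ.1 (single u 1) (single v 1)) (u * v))
  refine ⟨MonoidHom.mk' (fun u => Units.mk0 (d u) (hd_ne_zero u))
    fun u v => Units.ext (hd_mul u v), ?_⟩
  exact Finsupp.linearEquiv_ext fun u a => by simp [hφ_single]

namespace IsDegInvInvolution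

variable {ρ ρ' : (T →₀ F) ≃ₗ[F] (T →₀ F)}

lemma mul_self (hρ : IsDegInvInvolution σ ρ) : ρ * ρ = 1 := LinearEquiv.ext hρ.2.1

lemma isGradedAut_mul (hρ : IsDegInvInvolution σ ρ) (hρ' : IsDegInvInvolution σ ρ') :
    IsGradedAut σ (ρ * ρ') := by
  refine ⟨fun f g => ?_, fun u a => ?_⟩
  · simp only [LinearEquiv.mul_apply, hρ'.1, hρ.1]
  · obtain ⟨c, hc⟩ := hρ'.2.2 u a
    obtain ⟨c', hc'⟩ := hρ.2.2 u⁻¹ c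
    exact ⟨c', by rw [LinearEquiv.mul_apply, hc, hc', inv_inv]⟩

lemma mul_diagScale_mul_self (hρ : IsDegInvInvolution σ ρ) (ν : T → Fˣ) :
    ρ * diagScale ν * ρ = diagScale fun u => ν u⁻¹ := by
  refine Finsupp.linearEquiv_ext fun u a => ?_
  obtain ⟨c, hc⟩ := hρ.2.2 u a
  have hscale : diagScale ν (ρ (single u a)) = (ν u⁻¹ : F) • ρ (single u a) := by
    rw [hc, diagScale_single, smul_single, smul_eq_mul]
  rw [LinearEquiv.mul_apply, LinearEquiv.mul_apply, hscale, map_smul, hρ.2.1, diagScale_single,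
    smul_single, smul_eq_mul]

lemma mul_diagScale_mul_self_eq_inv (hρ : IsDegInvInvolution σ ρ) (η : T →* Fˣ) :
    ρ * diagScale ⇑η * ρ = (diagScale ⇑η)⁻¹ := by
  rw [hρ.mul_diagScale_mul_self, ← map_inv]
  congr 1
  funext u
  simp

lemma mul_diagScale (hρ : IsDegInvInvolution σ ρ) (η : T →* Fˣ) :
    IsDegInvInvolution σ (ρ * diagScale ⇑η) := by
  refine ⟨fun f g => ?_, fun f => ?_, fun u a => ?_⟩
  · simp only [LinearEquiv.mul_apply, (isGradedAut_diagScale σ η).1, hρ.1]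
  · have : ρ * diagScale ⇑η * (ρ * diagScale ⇑η) = 1 := by
      rw [← mul_assoc, hρ.mul_diagScale_mul_self_eq_inv, inv_mul_cancel]
    exact congr($this f)
  · simpa using hρ.2.2 u (η u * a)

lemma inv_mul_mul_diagScale_mul (hρ : IsDegInvInvolution σ ρ) (χ η : T →* Fˣ) :
    (diagScale ⇑η)⁻¹ * (ρ * diagScale ⇑χ) * diagScale ⇑η = ρ * diagScale ⇑(χ * η ^ 2) := by
  calc (diagScale ⇑η)⁻¹ * (ρ * diagScale ⇑χ) * diagScale ⇑η
      = ρ * diagScale ⇑η * (ρ * ρ) * diagScale ⇑χ * diagScale ⇑η := by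
        rw [← hρ.mul_diagScale_mul_self_eq_inv]; simp only [mul_assoc]
    _ = ρ * diagScale (⇑η * ⇑χ * ⇑η) := by
        rw [hρ.mul_self, mul_one, map_mul, map_mul]; simp only [mul_assoc]
    _ = ρ * diagScale ⇑(χ * η ^ 2) := by
        congr 2
        funext u
        simp only [Pi.mul_apply, MonoidHom.mul_apply, MonoidHom.pow_apply]
        rw [mul_comm (η u), mul_assoc, pow_two]

variable {ρ₀ : (T →₀ F) ≃ₗ[F] (T →₀ F)}

noncomputable def characterEquiv (h₀ : IsDegInvInvolution σ ρ₀) :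
    (T →* Fˣ) ≃ {ρ // IsDegInvInvolution σ ρ} :=
  Equiv.ofBijective (fun χ => ⟨ρ₀ * diagScale ⇑χ, h₀.mul_diagScale χ⟩) <| by
    refine ⟨fun χ χ' h => ?_, fun ρ => ?_⟩
    · exact DFunLike.coe_injective (diagScale_injective (mul_left_cancel congr($h.1)))
    · obtain ⟨η, hη⟩ := (h₀.isGradedAut_mul ρ.2).exists_eq_diagScale
      refine ⟨η, Subtype.ext ?_⟩
      change ρ₀ * diagScale ⇑η = ρ.1
      rw [← hη, ← mul_assoc, h₀.mul_self, one_mul]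

lemma exists_conj_mul_diagScale_iff (h₀ : IsDegInvInvolution σ ρ₀) (χ₁ χ₂ : T →* Fˣ) :
    (∃ φ, IsGradedAut σ φ ∧ ρ₀ * diagScale ⇑χ₂ = φ⁻¹ * (ρ₀ * diagScale ⇑χ₁) * φ) ↔
      ∃ η : T →* Fˣ, χ₁ * η ^ 2 = χ₂ := by
  constructor
  · rintro ⟨φ, hφ, hconj⟩
    obtain ⟨η, rfl⟩ := hφ.exists_eq_diagScale
    refine ⟨η, DFunLike.coe_injective (diagScale_injective (mul_left_cancel (a := ρ₀) ?_))⟩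
    rw [hconj, h₀.inv_mul_mul_diagScale_mul]
  · rintro ⟨η, rfl⟩
    exact ⟨diagScale ⇑η, isGradedAut_diagScale σ η, (h₀.inv_mul_mul_diagScale_mul χ₁ η).symm⟩

end IsDegInvInvolution

end Graded

theorem card_degInvInvolution_classes_general
    {T : Type*} [Group T] {F : Type*} [Field F]
    (σ : T → T → Fˣ)
    (hex : ∃ ρ : (T →₀ F) ≃ₗ[F] (T →₀ F), IsDegInvInvolution σ ρ) :
    Nat.card (Quot (fun ρ₁ ρ₂ : {ρ : (T →₀ F) ≃ₗ[F] (T →₀ F) // IsDegInvInvolution σ ρ} =>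
        ∃ φ : (T →₀ F) ≃ₗ[F] (T →₀ F), IsGradedAut σ φ ∧
          ρ₂.1 = φ.trans (ρ₁.1.trans φ.symm))) =
    Nat.card ((T →* Fˣ) ⧸ @MonoidHom.range (T →* Fˣ) _ (T →* Fˣ) _ (powMonoidHom 2)) := by
  obtain ⟨ρ₀, h₀⟩ := hex
  refine (Nat.card_congr (Quot.congr h₀.characterEquiv fun χ₁ χ₂ => ?_)).symm
  rw [QuotientGroup.leftRel_apply, MonoidHom.mem_range]
  simp only [powMonoidHom_apply, eq_inv_mul_iff_mul_eq]
  exact (h₀.exists_conj_mul_diagScale_iff χ₁ χ₂).symm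

/-- If `F^σ T` admits a degree-inverting involution, then the number of equivalence
classes of degree-inverting involutions (two involutions being equivalent when conjugate
by a graded automorphism) equals `|Ĥ / S(Ĥ)|`, where `Ĥ = Hom(T, Fˣ)` and `S(Ĥ)` is the
subgroup of squares of `Ĥ`. -/
theorem card_degInvInvolution_classes
    {T : Type*} [Group T] [Finite T] {F : Type*} [Field F]
    (σ : T → T → Fˣ) (hσ : IsCocycle σ)
    (hex : ∃ ρ : (T →₀ F) ≃ₗ[F] (T →₀ F), IsDegInvInvolution σ ρ) :
    Nat.card (Quot (fun ρ₁ ρ₂ : {ρ : (T →₀ F) ≃ₗ[F] (T →₀ F) // IsDegInvInvolution σ ρ} =>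
        ∃ φ : (T →₀ F) ≃ₗ[F] (T →₀ F), IsGradedAut σ φ ∧
          ρ₂.1 = φ.trans (ρ₁.1.trans φ.symm))) =
    Nat.card ((T →* Fˣ) ⧸ @MonoidHom.range (T →* Fˣ) _ (T →* Fˣ) _ (powMonoidHom 2)) :=
  card_degInvInvolution_classes_general σ hex
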